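/- arXiv:1911.00395 — 6 statements merged into one kernel-verified Lean document; each statement's English description precedes it below -/
import Mathlib

section
/- The function v is well defined and finite on [0,∞), satisfies 1 + v(t) > 0 for all t ≥ 0, and the effective potential V(t) = t − log(1+v(t)) is real-analytic on (0,∞). -/
open MeasureTheory Filter Set Topology

/-- Modified Bessel function of the first kind `I₁`, defined by its power series. -/
noncomputable def besselI1 (z : ℝ) : ℝ :=
  ∑' k : ℕ, (1 / ((Nat.factorial k : ℝ) * (Nat.factorial (k + 1) : ℝ))) * (z / 2) ^ (2 * k + 1)

/-- `v(t) = ∫₀^∞ p(s) e^{-s} √(t/s) I₁(2√(st)) ds`. -/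
noncomputable def vFun (p : ℝ → ℝ) (t : ℝ) : ℝ :=
  ∫ s in Set.Ioi (0 : ℝ), p s * Real.exp (-s) * Real.sqrt (t / s) * besselI1 (2 * Real.sqrt (s * t))

/-!
Expanding `I₁` as a power series, the integrand at `s > 0` equals `t * ∑ₖ cₖ(s) tᵏ` with
`cₖ(s) = p(s) e^{-s} sᵏ / (k! (k+1)!)`, and `e^{-s} sᵏ ≤ k!` gives `|cₖ(s)| ≤ |p(s)| / k!`.
This domination by `|p| / k!` lets the series be integrated term by term, so that
`v(t) = t * ∑ₖ (∫ cₖ) tᵏ` is given on `[0, ∞)` by an everywhere convergent power series.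
The integrand is nonnegative, so `1 + v ≥ 1` and `log (1 + v)` is analytic as well.
-/

open scoped Nat

lemma analyticAt_tsum_mul_pow_of_abs_le {c : ℕ → ℝ} {C : ℝ} (hc : ∀ n, |c n| ≤ C / n !)
    (x : ℝ) : AnalyticAt ℝ (fun x ↦ ∑' n, c n * x ^ n) x := by
  set P := FormalMultilinearSeries.ofScalars ℝ c
  have hP : P.radius = ⊤ := by
    refine P.radius_eq_top_of_summable_norm fun r ↦ ?_
    refine .of_nonneg_of_le (fun n ↦ by positivity) (fun n ↦ ?_)
      ((Real.summable_pow_div_factorial r).mul_left C)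
    calc ‖P n‖ * (r : ℝ) ^ n ≤ C / n ! * (r : ℝ) ^ n := by
          rw [FormalMultilinearSeries.ofScalars_norm, Real.norm_eq_abs]; gcongr; exact hc n
      _ = C * ((r : ℝ) ^ n / n !) := by ring
  have hsum : P.sum = fun x ↦ ∑' n, c n * x ^ n :=
    FormalMultilinearSeries.ofScalarsSum_eq_tsum c
  have hball := P.hasFPowerSeriesOnBall (hP ▸ ENNReal.zero_lt_top)
  rw [hP, hsum] at hball
  exact hball.analyticAt_of_mem (by simp)

section PowerSeriesIntegral

variable {α : Type*} [MeasurableSpace α] {μ : Measure α} {a : ℕ → α → ℝ} {b : α → ℝ}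

lemma norm_mul_pow_le_of_abs_le_div_factorial {x y t : ℝ} {n : ℕ} (h : |x| ≤ y / n !) :
    ‖x * t ^ n‖ ≤ y * (|t| ^ n / n !) :=
  calc ‖x * t ^ n‖ = |x| * |t| ^ n := by rw [norm_mul, norm_pow, Real.norm_eq_abs, Real.norm_eq_abs]
    _ ≤ y / n ! * |t| ^ n := by gcongr
    _ = y * (|t| ^ n / n !) := by ring

lemma integrable_of_abs_le_div_factorial {n : ℕ} (ha : AEStronglyMeasurable (a n) μ)
    (hb : Integrable b μ) (hab : ∀ᵐ s ∂μ, |a n s| ≤ b s / n !) : Integrable (a n) μ :=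
  (hb.div_const _).mono' ha (by simpa only [Real.norm_eq_abs] using hab)

lemma hasSum_integral_mul_pow (ha : ∀ n, AEStronglyMeasurable (a n) μ) (hb : Integrable b μ)
    (hab : ∀ n, ∀ᵐ s ∂μ, |a n s| ≤ b s / n !) (t : ℝ) :
    HasSum (fun n ↦ (∫ s, a n s ∂μ) * t ^ n) (∫ s, ∑' n, a n s * t ^ n ∂μ) := by
  have hint n := integrable_of_abs_le_div_factorial (ha n) hb (hab n)
  have hnorm n : ∫ s, ‖a n s * t ^ n‖ ∂μ ≤ (∫ s, b s ∂μ) * (|t| ^ n / n !) := by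
    rw [← integral_mul_const]
    refine integral_mono_ae ((hint n).mul_const _).norm (hb.mul_const _) ?_
    filter_upwards [hab n] with s hs using norm_mul_pow_le_of_abs_le_div_factorial hs
  have hsummable : Summable fun n ↦ ∫ s, ‖a n s * t ^ n‖ ∂μ :=
    .of_nonneg_of_le (fun n ↦ integral_nonneg fun s ↦ norm_nonneg _) hnorm
      ((Real.summable_pow_div_factorial |t|).mul_left _)
  simpa only [integral_mul_const] using
    hasSum_integral_of_summable_integral_norm (fun n ↦ (hint n).mul_const _) hsummable

lemma integrable_tsum_mul_pow (ha : ∀ n, AEStronglyMeasurable (a n) μ) (hb : Integrable b μ)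
    (hab : ∀ n, ∀ᵐ s ∂μ, |a n s| ≤ b s / n !) (t : ℝ) :
    Integrable (fun s ↦ ∑' n, a n s * t ^ n) μ := by
  have hbound : ∀ᵐ s ∂μ, ∀ n, ‖a n s * t ^ n‖ ≤ b s * (|t| ^ n / n !) := by
    filter_upwards [ae_all_iff.2 hab] with s hs n
      using norm_mul_pow_le_of_abs_le_div_factorial (hs n)
  have hmeas : AEStronglyMeasurable (fun s ↦ ∑' n, a n s * t ^ n) μ := by
    refine aestronglyMeasurable_of_tendsto_ae atTop
      (f := fun N s ↦ ∑ n ∈ Finset.range N, a n s * t ^ n)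
      (fun N ↦ Finset.aestronglyMeasurable_fun_sum _ fun n _ ↦ (ha n).mul_const _) ?_
    filter_upwards [hbound] with s hs
    exact (Summable.of_norm_bounded ((Real.summable_pow_div_factorial |t|).mul_left (b s))
      hs).hasSum.tendsto_sum_nat
  refine (hb.mul_const (∑' n, |t| ^ n / n !)).mono' hmeas ?_
  filter_upwards [hbound] with s hs
  exact tsum_of_norm_bounded ((Real.summable_pow_div_factorial |t|).hasSum.mul_left (b s)) hs

lemma analyticAt_integral_tsum_mul_pow (ha : ∀ n, AEStronglyMeasurable (a n) μ)
    (hb : Integrable b μ) (hab : ∀ n, ∀ᵐ s ∂μ, |a n s| ≤ b s / n !) (t : ℝ) :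
    AnalyticAt ℝ (fun t ↦ ∫ s, ∑' n, a n s * t ^ n ∂μ) t := by
  have hcoeff n : |∫ s, a n s ∂μ| ≤ (∫ s, b s ∂μ) / n ! := by
    rw [← integral_div]
    refine abs_integral_le_integral_abs.trans (integral_mono_ae ?_ (hb.div_const _) (hab n))
    exact (integrable_of_abs_le_div_factorial (ha n) hb (hab n)).abs
  simpa only [(hasSum_integral_mul_pow ha hb hab _).tsum_eq] using
    analyticAt_tsum_mul_pow_of_abs_le hcoeff t

end PowerSeriesIntegral

lemma besselI1_nonneg {z : ℝ} (hz : 0 ≤ z) : 0 ≤ besselI1 z :=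
  tsum_nonneg fun k ↦ by positivity

lemma besselI1_two_mul (x : ℝ) :
    besselI1 (2 * x) = x * ∑' k : ℕ, (x ^ 2) ^ k / (k ! * (k + 1)!) := by
  rw [besselI1, ← tsum_mul_left]
  refine tsum_congr fun k ↦ ?_
  rw [mul_div_cancel_left₀ x two_ne_zero, pow_succ, pow_mul]
  ring

lemma sqrt_div_mul_besselI1 {s t : ℝ} (hs : 0 < s) (ht : 0 ≤ t) :
    √(t / s) * besselI1 (2 * √(s * t)) = t * ∑' k : ℕ, s ^ k * t ^ k / (k ! * (k + 1)!) := by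
  have hst : √(t / s) * √(s * t) = t := by
    rw [← Real.sqrt_mul (div_nonneg ht hs.le), show t / s * (s * t) = t * t by field_simp,
      Real.sqrt_mul_self ht]
  rw [besselI1_two_mul, ← mul_assoc, hst, Real.sq_sqrt (by positivity)]
  simp only [mul_pow]

noncomputable def vFunCoeff (p : ℝ → ℝ) (k : ℕ) (s : ℝ) : ℝ :=
  p s * Real.exp (-s) * s ^ k / (k ! * (k + 1)!)

lemma vFun_integrand_eq_mul_tsum (p : ℝ → ℝ) {s t : ℝ} (hs : 0 < s) (ht : 0 ≤ t) :
    p s * Real.exp (-s) * √(t / s) * besselI1 (2 * √(s * t)) =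
      t * ∑' k, vFunCoeff p k s * t ^ k := by
  rw [mul_assoc, sqrt_div_mul_besselI1 hs ht, mul_left_comm, ← tsum_mul_left]
  congr 1
  refine tsum_congr fun k ↦ ?_
  rw [vFunCoeff]
  ring

lemma abs_vFunCoeff_le (p : ℝ → ℝ) (k : ℕ) {s : ℝ} (hs : 0 ≤ s) :
    |vFunCoeff p k s| ≤ |p s| / k ! := by
  have hexp : s ^ k / k ! / Real.exp s ≤ 1 :=
    div_le_one_of_le₀ (Real.pow_div_factorial_le_exp s hs k) (Real.exp_pos s).le
  have hfac : (k ! : ℝ) ≤ (k + 1)! := by exact_mod_cast Nat.factorial_le k.le_succ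
  calc |vFunCoeff p k s| = |p s| * (s ^ k / k ! / Real.exp s) / (k + 1)! := by
        rw [vFunCoeff, abs_div, abs_mul, abs_mul, abs_of_pos (Real.exp_pos _),
          abs_of_nonneg (pow_nonneg hs k), abs_of_pos (by positivity : (0 : ℝ) < k ! * (k + 1)!),
          Real.exp_neg]
        field_simp
    _ ≤ |p s| * 1 / k ! := by gcongr
    _ = |p s| / k ! := by rw [mul_one]

section vFun

variable {p : ℝ → ℝ}

lemma aestronglyMeasurable_vFunCoeff (hp : IntegrableOn p (Ioi 0)) (k : ℕ) :
    AEStronglyMeasurable (vFunCoeff p k) (volume.restrict (Ioi 0)) := by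
  have := hp.aestronglyMeasurable
  unfold vFunCoeff
  fun_prop

lemma ae_abs_vFunCoeff_le (p : ℝ → ℝ) (k : ℕ) :
    ∀ᵐ s ∂volume.restrict (Ioi 0), |vFunCoeff p k s| ≤ |p s| / k ! :=
  ae_restrict_of_forall_mem measurableSet_Ioi fun _ hs ↦ abs_vFunCoeff_le p k (le_of_lt hs)

lemma vFun_eq_mul_integral_tsum {t : ℝ} (ht : 0 ≤ t) :
    vFun p t = t * ∫ s in Ioi 0, ∑' k, vFunCoeff p k s * t ^ k := by
  rw [vFun, ← integral_const_mul]
  exact setIntegral_congr_fun measurableSet_Ioi fun s hs ↦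
    vFun_integrand_eq_mul_tsum p hs ht

lemma integrableOn_vFun_integrand (hp : IntegrableOn p (Ioi 0)) {t : ℝ} (ht : 0 ≤ t) :
    IntegrableOn (fun s ↦ p s * Real.exp (-s) * √(t / s) * besselI1 (2 * √(s * t))) (Ioi 0) :=
  ((integrable_tsum_mul_pow (aestronglyMeasurable_vFunCoeff hp) hp.abs (ae_abs_vFunCoeff_le p)
    t).const_mul t).congr <| ae_restrict_of_forall_mem measurableSet_Ioi fun _ hs ↦
      (vFun_integrand_eq_mul_tsum p hs ht).symm

lemma vFun_nonneg (hp : ∀ s, 0 ≤ s → 0 ≤ p s) (t : ℝ) : 0 ≤ vFun p t :=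
  setIntegral_nonneg measurableSet_Ioi fun s hs ↦ by
    have := hp s (le_of_lt hs)
    have := besselI1_nonneg (by positivity : 0 ≤ 2 * √(s * t))
    positivity

lemma analyticOnNhd_vFun (hp : IntegrableOn p (Ioi 0)) : AnalyticOnNhd ℝ (vFun p) (Ioi 0) := by
  intro t ht
  refine (analyticAt_id.mul (analyticAt_integral_tsum_mul_pow
    (aestronglyMeasurable_vFunCoeff hp) hp.abs (ae_abs_vFunCoeff_le p) t)).congr ?_
  filter_upwards [Ioi_mem_nhds ht] with u hu
  exact (vFun_eq_mul_integral_tsum (le_of_lt hu)).symm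

end vFun

theorem stmt1_general (p : ℝ → ℝ) (hpos : ∀ s, 0 ≤ s → 0 ≤ p s)
    (hint : IntegrableOn p (Set.Ioi 0)) :
    (∀ t : ℝ, 0 ≤ t →
      IntegrableOn (fun s => p s * Real.exp (-s) * Real.sqrt (t / s) *
        besselI1 (2 * Real.sqrt (s * t))) (Set.Ioi 0)) ∧
    (∀ t : ℝ, 0 ≤ t → 0 < 1 + vFun p t) ∧
    AnalyticOnNhd ℝ (fun t => t - Real.log (1 + vFun p t)) (Set.Ioi 0) := by
  have hv_pos : ∀ t : ℝ, 0 ≤ t → 0 < 1 + vFun p t := fun t _ ↦ by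
    linarith [vFun_nonneg hpos t]
  refine ⟨fun t ht ↦ integrableOn_vFun_integrand hint ht, hv_pos, ?_⟩
  exact analyticOnNhd_id.sub <| (analyticOnNhd_const.add (analyticOnNhd_vFun hint)).log
    fun t ht ↦ hv_pos t (le_of_lt ht)

theorem stmt1 (p : ℝ → ℝ) (hmeas : Measurable p) (hpos : ∀ s, 0 ≤ s → 0 ≤ p s)
    (hint : IntegrableOn p (Set.Ioi 0)) :
    (∀ t : ℝ, 0 ≤ t →
      IntegrableOn (fun s => p s * Real.exp (-s) * Real.sqrt (t / s) *
        besselI1 (2 * Real.sqrt (s * t))) (Set.Ioi 0)) ∧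
    (∀ t : ℝ, 0 ≤ t → 0 < 1 + vFun p t) ∧
    AnalyticOnNhd ℝ (fun t => t - Real.log (1 + vFun p t)) (Set.Ioi 0) :=
  stmt1_general p hpos hint
end

section
/- Let a ∈ [−∞,∞), b ∈ (−∞,∞], and let V, q : (a,b) → ℝ be real-analytic. Suppose V has a unique global minimum at a point t₀ ∈ (a,b), with V′(t₀) = 0 and V″(t₀) > 0, that q(t₀) ≠ 0, and that ∫ₐᵇ e^{−NV(t)}|q(t)| dt < ∞ for some N. Then as N → ∞, ∫ₐᵇ e^{−NV(t)} q(t) dt ~ e^{−NV(t₀)}·q(t₀)·√(2π/(N·V″(t₀))). -/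
/-!
Laplace's method. With `W = V - V t₀` the integral is `exp (-N V t₀) ∫ exp (-N W) q`. By
l'Hôpital `W t / (t - t₀)² → V''(t₀) / 2`, so `W t ≥ a (t - t₀)²` on a small ball around `t₀`;
after the substitution `t = t₀ + s / √N`, dominated convergence (with a Gaussian majorant) gives
`√N ∫_ball exp (-N W) q → q t₀ √(2π / V''(t₀))`. Off the ball `W ≥ c > 0`, so comparing with the
integrable `exp (-N₀ W) |q|` bounds the rest by `O(exp (-c N))`.
-/

open MeasureTheory Filter Set Topology Real

/-- The real interval `(a, b)` with extended-real endpoints. -/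
def erealIoo (a b : EReal) : Set ℝ := {t : ℝ | a < (t : EReal) ∧ (t : EReal) < b}

open Metric

theorem tendsto_sub_div_sq_of_deriv_eq_zero {f : ℝ → ℝ} {x₀ c : ℝ}
    (hf : ∀ᶠ x in 𝓝 x₀, DifferentiableAt ℝ f x) (hf' : deriv f x₀ = 0)
    (hf'' : HasDerivAt (deriv f) c x₀) :
    Tendsto (fun x => (f x - f x₀) / (x - x₀) ^ 2) (𝓝[≠] x₀) (𝓝 (c / 2)) := by
  have hslope : Tendsto (fun x => deriv f x / (2 * (x - x₀))) (𝓝[≠] x₀) (𝓝 (c / 2)) := by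
    refine ((hasDerivAt_iff_tendsto_slope.1 hf'').div_const 2).congr fun x => ?_
    rw [slope_def_field, hf', sub_zero, div_div, mul_comm]
  refine HasDerivAt.lhopital_zero_nhdsNE ?_ ?_ ?_ ?_ ?_ hslope
  · exact (hf.filter_mono nhdsWithin_le_nhds).mono fun x hx => hx.hasDerivAt.sub_const (f x₀)
  · refine Eventually.of_forall fun x => ?_
    simpa using ((hasDerivAt_id x).sub_const x₀).fun_pow 2
  · filter_upwards [self_mem_nhdsWithin] with x hx
    exact mul_ne_zero two_ne_zero (sub_ne_zero.2 hx)
  · refine tendsto_nhdsWithin_of_tendsto_nhds ?_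
    simpa using hf.self_of_nhds.continuousAt.sub_const (f x₀)
  · refine tendsto_nhdsWithin_of_tendsto_nhds ?_
    exact ((continuous_sub_right x₀).pow 2).tendsto' x₀ 0 (by simp)

theorem eventually_mul_sq_le_of_tendsto_div_sq {W : ℝ → ℝ} {t₀ a A : ℝ}
    (hW : Tendsto (fun t => W t / (t - t₀) ^ 2) (𝓝[≠] t₀) (𝓝 A)) (hW₀ : W t₀ = 0) (ha : a < A) :
    ∀ᶠ t in 𝓝 t₀, a * (t - t₀) ^ 2 ≤ W t := by
  filter_upwards [eventually_nhdsWithin_iff.1 (hW.eventually (lt_mem_nhds ha))] with t ht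
  rcases eq_or_ne t t₀ with rfl | hne
  · simp [hW₀]
  · exact ((lt_div_iff₀ (sq_pos_of_ne_zero (sub_ne_zero.2 hne))).1 (ht hne)).le

theorem tendsto_add_div_sqrt_atTop (t₀ s : ℝ) : Tendsto (fun N => t₀ + s / √N) atTop (𝓝 t₀) := by
  simpa using tendsto_const_nhds.add
    (tendsto_const_nhds.div_atTop tendsto_sqrt_atTop : Tendsto (fun N => s / √N) _ _)

theorem tendsto_mul_apply_add_div_sqrt {W : ℝ → ℝ} {t₀ A : ℝ}
    (hW : Tendsto (fun t => W t / (t - t₀) ^ 2) (𝓝[≠] t₀) (𝓝 A)) (hW₀ : W t₀ = 0) (s : ℝ) :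
    Tendsto (fun N => N * W (t₀ + s / √N)) atTop (𝓝 (A * s ^ 2)) := by
  rcases eq_or_ne s 0 with rfl | hs
  · simp [hW₀]
  have hshift : Tendsto (fun N => t₀ + s / √N) atTop (𝓝[≠] t₀) := by
    refine tendsto_nhdsWithin_iff.2 ⟨tendsto_add_div_sqrt_atTop t₀ s, ?_⟩
    filter_upwards [eventually_gt_atTop 0] with N hN
    simpa [hs] using (sqrt_pos.2 hN).ne'
  refine ((hW.comp hshift).mul_const (s ^ 2)).congr' ?_
  filter_upwards [eventually_gt_atTop 0] with N hN
  have hsq : (s / √N) ^ 2 = s ^ 2 / N := by rw [div_pow, sq_sqrt hN.le]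
  simp only [Function.comp_apply, add_sub_cancel_left, hsq]
  field_simp

theorem sqrt_mul_integral_eq_integral_comp_add_div_sqrt (g : ℝ → ℝ) (t₀ N : ℝ) :
    √N * ∫ t, g t = ∫ s, g (t₀ + s / √N) := by
  rw [Measure.integral_comp_div (fun u => g (t₀ + u)), integral_add_left_eq_self g t₀,
    abs_of_nonneg (sqrt_nonneg N), smul_eq_mul]

theorem tendsto_sqrt_mul_setIntegral_ball {W q : ℝ → ℝ} {t₀ δ a A M : ℝ} (hδ : 0 < δ)
    (ha : 0 < a) (hWc : ContinuousOn W (ball t₀ δ)) (hqc : ContinuousOn q (ball t₀ δ))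
    (hW : Tendsto (fun t => W t / (t - t₀) ^ 2) (𝓝[≠] t₀) (𝓝 A)) (hW₀ : W t₀ = 0)
    (hWa : ∀ t ∈ ball t₀ δ, a * (t - t₀) ^ 2 ≤ W t) (hqM : ∀ t ∈ ball t₀ δ, |q t| ≤ M) :
    Tendsto (fun N => √N * ∫ t in ball t₀ δ, exp (-N * W t) * q t) atTop
      (𝓝 (q t₀ * √(π / A))) := by
  set g : ℝ → ℝ → ℝ := fun N => (ball t₀ δ).indicator fun t => exp (-N * W t) * q t
  have hF : ∀ N, √N * ∫ t in ball t₀ δ, exp (-N * W t) * q t = ∫ s, g N (t₀ + s / √N) := by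
    intro N
    rw [← integral_indicator measurableSet_ball]
    exact sqrt_mul_integral_eq_integral_comp_add_div_sqrt (g N) t₀ N
  have hlim : ∫ s, exp (-A * s ^ 2) * q t₀ = q t₀ * √(π / A) := by
    rw [integral_mul_const, integral_gaussian, mul_comm]
  simp only [hF, ← hlim]
  refine tendsto_integral_filter_of_dominated_convergence (fun s => M * exp (-a * s ^ 2))
    (Eventually.of_forall fun N => ?_) ?_ ((integrable_exp_neg_mul_sq ha).const_mul M)
    (ae_of_all _ fun s => ?_)
  · have hφ : Continuous fun s => t₀ + s / √N := by fun_prop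
    have hcont : ContinuousOn (fun t => exp (-N * W t) * q t) (ball t₀ δ) := by fun_prop
    simp only [g, ← indicator_comp_right (fun s => t₀ + s / √N)]
    exact (aestronglyMeasurable_indicator_iff (isOpen_ball.preimage hφ).measurableSet).2
      ((hcont.comp hφ.continuousOn (mapsTo_preimage _ _)).aestronglyMeasurable
        (isOpen_ball.preimage hφ).measurableSet)
  · filter_upwards [eventually_gt_atTop 0] with N hN
    refine ae_of_all _ fun s => ?_
    have hM : 0 ≤ M := (abs_nonneg _).trans (hqM t₀ (mem_ball_self hδ))
    by_cases hs : t₀ + s / √N ∈ ball t₀ δ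
    · have hexp : -N * W (t₀ + s / √N) ≤ -a * s ^ 2 := by
        have hWs := hWa _ hs
        rw [add_sub_cancel_left] at hWs
        calc -N * W (t₀ + s / √N) ≤ -N * (a * (s / √N) ^ 2) := by nlinarith
          _ = -a * s ^ 2 := by rw [div_pow, sq_sqrt hN.le]; field_simp
      simp only [g, indicator_of_mem hs, norm_mul, Real.norm_eq_abs, abs_exp]
      rw [mul_comm M]
      exact mul_le_mul (exp_le_exp.2 hexp) (hqM _ hs) (abs_nonneg _) (exp_nonneg _)
    · simp only [g, indicator_of_notMem hs, norm_zero]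
      positivity
  · have hφ := tendsto_add_div_sqrt_atTop t₀ s
    have hball : ball t₀ δ ∈ 𝓝 t₀ := isOpen_ball.mem_nhds (mem_ball_self hδ)
    have hexp := (tendsto_mul_apply_add_div_sqrt hW hW₀ s).neg.rexp
    have hq := (hqc.continuousAt hball).tendsto.comp hφ
    have hprod : Tendsto (fun N => exp (-N * W (t₀ + s / √N)) * q (t₀ + s / √N)) atTop
        (𝓝 (exp (-A * s ^ 2) * q t₀)) := by
      simpa only [neg_mul, Function.comp_apply] using hexp.mul hq
    refine hprod.congr' ?_
    filter_upwards [hφ hball] with N hN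
    exact (indicator_of_mem (s := ball t₀ δ) hN (fun t => exp (-N * W t) * q t)).symm

theorem integrable_exp_neg_mul_mul_of_le {α : Type*} [MeasurableSpace α] {μ : Measure α}
    {W q : α → ℝ} {N₀ N : ℝ} (hN : N₀ ≤ N) (hW : ∀ᵐ x ∂μ, 0 ≤ W x)
    (hm : AEStronglyMeasurable (fun x => exp (-N * W x) * q x) μ)
    (hint : Integrable (fun x => exp (-N₀ * W x) * |q x|) μ) :
    Integrable (fun x => exp (-N * W x) * q x) μ := by
  refine hint.mono' hm ?_
  filter_upwards [hW] with x hx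
  rw [norm_mul, Real.norm_eq_abs, Real.norm_eq_abs, abs_exp]
  gcongr

theorem tendsto_sqrt_mul_integral_exp_neg_mul_of_le {α : Type*} [MeasurableSpace α]
    {μ : Measure α} {W q : α → ℝ} {c N₀ : ℝ} (hc : 0 < c) (hW : ∀ᵐ x ∂μ, c ≤ W x)
    (hint : Integrable (fun x => exp (-N₀ * W x) * |q x|) μ) :
    Tendsto (fun N => √N * ∫ x, exp (-N * W x) * q x ∂μ) atTop (𝓝 0) := by
  set C := ∫ x, exp (-N₀ * W x) * |q x| ∂μ
  have hdecay : Tendsto (fun N : ℝ => exp (c * N₀) * C * (√N * exp (-c * N))) atTop (𝓝 0) := by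
    simpa [sqrt_eq_rpow] using
      (tendsto_rpow_mul_exp_neg_mul_atTop_nhds_zero _ c hc).const_mul (exp (c * N₀) * C)
  refine squeeze_zero_norm' ?_ hdecay
  filter_upwards [eventually_ge_atTop N₀] with N hN
  -- `exp (-N W) = exp (-(N - N₀) W) exp (-N₀ W)` and `W ≥ c`
  have hbound : ‖∫ x, exp (-N * W x) * q x ∂μ‖ ≤ exp (c * N₀ - c * N) * C := by
    rw [← integral_const_mul]
    refine norm_integral_le_of_norm_le (hint.const_mul _) ?_
    filter_upwards [hW] with x hx
    rw [norm_mul, Real.norm_eq_abs, Real.norm_eq_abs, abs_exp, ← mul_assoc, ← exp_add]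
    gcongr
    nlinarith
  rw [norm_mul, Real.norm_of_nonneg (sqrt_nonneg N)]
  calc _ ≤ √N * (exp (c * N₀ - c * N) * C) := by gcongr
    _ = _ := by rw [sub_eq_add_neg, exp_add, neg_mul]; ring

theorem tendsto_sqrt_mul_setIntegral_exp_neg_mul {S : Set ℝ} {W q : ℝ → ℝ} {t₀ A N₀ : ℝ}
    (hS : MeasurableSet S) (hSt₀ : S ∈ 𝓝 t₀) (hWc : ContinuousOn W S) (hqc : ContinuousOn q S)
    (hA : 0 < A) (hW : Tendsto (fun t => W t / (t - t₀) ^ 2) (𝓝[≠] t₀) (𝓝 A)) (hW₀ : W t₀ = 0)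
    (hWtail : ∀ ε > 0, ∃ c > 0, ∀ t ∈ S, ε ≤ |t - t₀| → c ≤ W t)
    (hint : IntegrableOn (fun t => exp (-N₀ * W t) * |q t|) S) :
    Tendsto (fun N => √N * ∫ t in S, exp (-N * W t) * q t) atTop (𝓝 (q t₀ * √(π / A))) := by
  have hq_bdd : ∀ᶠ t in 𝓝 t₀, |q t| ≤ |q t₀| + 1 :=
    ((hqc.continuousAt hSt₀).abs.eventually (gt_mem_nhds (lt_add_one _))).mono fun _ h => h.le
  obtain ⟨δ, hδ, hball⟩ := eventually_nhds_iff_ball.1 <| (eventually_mem_set.2 hSt₀).and <|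
    (eventually_mul_sq_le_of_tendsto_div_sq hW hW₀ (half_lt_self hA)).and hq_bdd
  have hballS : ball t₀ δ ⊆ S := fun t ht => (hball t ht).1
  have hout : ∀ t ∉ ball t₀ δ, δ ≤ |t - t₀| := fun t ht => by simpa [Real.dist_eq] using ht
  obtain ⟨c, hc, hcW⟩ := hWtail δ hδ
  have hW_nonneg : ∀ t ∈ S, 0 ≤ W t := fun t ht => by
    by_cases htb : t ∈ ball t₀ δ
    · exact (mul_nonneg (half_pos hA).le (sq_nonneg _)).trans (hball t htb).2.1
    · exact hc.le.trans (hcW t ht (hout t htb))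
  have hnear := tendsto_sqrt_mul_setIntegral_ball hδ (half_pos hA) (hWc.mono hballS)
    (hqc.mono hballS) hW hW₀ (fun t ht => (hball t ht).2.1) (fun t ht => (hball t ht).2.2)
  have htail := tendsto_sqrt_mul_integral_exp_neg_mul_of_le hc
    (ae_restrict_of_forall_mem (hS.diff measurableSet_ball) fun t ht => hcW t ht.1 (hout t ht.2))
    (hint.mono_set sdiff_subset)
  rw [← add_zero (q t₀ * _)]
  refine (hnear.add htail).congr' ?_
  filter_upwards [eventually_ge_atTop N₀] with N hN
  have hintN : IntegrableOn (fun t => exp (-N * W t) * q t) S :=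
    integrable_exp_neg_mul_mul_of_le hN (ae_restrict_of_forall_mem hS hW_nonneg)
      (by refine ContinuousOn.aestronglyMeasurable ?_ hS; fun_prop) hint
  have hsplit := integral_inter_add_sdiff (measurableSet_ball (x := t₀) (ε := δ)) hintN
  rw [inter_eq_right.2 hballS] at hsplit
  rw [← mul_add, hsplit]

theorem tendsto_setIntegral_exp_neg_mul_div_laplace {S : Set ℝ} {V q : ℝ → ℝ} {t₀ c N₀ : ℝ}
    (hS : MeasurableSet S) (hSt₀ : S ∈ 𝓝 t₀) (hVc : ContinuousOn V S) (hqc : ContinuousOn q S)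
    (hc : 0 < c) (hV : Tendsto (fun t => (V t - V t₀) / (t - t₀) ^ 2) (𝓝[≠] t₀) (𝓝 (c / 2)))
    (hVtail : ∀ ε > 0, ∃ η > 0, ∀ t ∈ S, ε ≤ |t - t₀| → V t₀ + η ≤ V t) (hq : q t₀ ≠ 0)
    (hint : IntegrableOn (fun t => exp (-N₀ * V t) * |q t|) S) :
    Tendsto (fun N => (∫ t in S, exp (-N * V t) * q t) /
      (exp (-N * V t₀) * q t₀ * √(2 * π / (N * c)))) atTop (𝓝 1) := by
  have hexp : ∀ N t, exp (-N * V t) = exp (-N * V t₀) * exp (-N * (V t - V t₀)) := fun N t => by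
    rw [← exp_add]; ring_nf
  have hWtail : ∀ ε > 0, ∃ η > 0, ∀ t ∈ S, ε ≤ |t - t₀| → η ≤ V t - V t₀ := fun ε hε => by
    obtain ⟨η, hη, h⟩ := hVtail ε hε
    exact ⟨η, hη, fun t ht hεt => le_sub_iff_add_le'.2 (h t ht hεt)⟩
  have hintW : IntegrableOn (fun t => exp (-N₀ * (V t - V t₀)) * |q t|) S := by
    refine (hint.const_mul (exp (N₀ * V t₀))).congr (Eventually.of_forall fun t => ?_)
    simp only [hexp N₀ t, ← mul_assoc, ← exp_add]
    ring_nf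
  have hlim := tendsto_sqrt_mul_setIntegral_exp_neg_mul (W := fun t => V t - V t₀) hS hSt₀
    (hVc.sub continuousOn_const) hqc (half_pos hc) hV (sub_self _) hWtail hintW
  have hne : q t₀ * √(π / (c / 2)) ≠ 0 := mul_ne_zero hq (sqrt_pos.2 (by positivity)).ne'
  refine (div_self hne ▸ hlim.div_const _).congr' ?_
  filter_upwards [eventually_gt_atTop 0] with N hN
  have hsqrt : √(2 * π / (N * c)) = √(π / (c / 2)) / √N := by
    rw [← sqrt_div' _ hN.le]; congr 1; field_simp
  have hfactor : ∫ t in S, exp (-N * V t) * q t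
      = exp (-N * V t₀) * ∫ t in S, exp (-N * (V t - V t₀)) * q t := by
    rw [← integral_const_mul]
    congr 1 with t
    rw [hexp N t, mul_assoc]
  rw [hfactor, hsqrt]
  field_simp

theorem stmt7_general (a b : EReal) (V q : ℝ → ℝ) (t₀ : ℝ)
    (ht₀ : t₀ ∈ erealIoo a b)
    (hVan : AnalyticOnNhd ℝ V (erealIoo a b))
    (hqan : AnalyticOnNhd ℝ q (erealIoo a b))
    -- V has a unique global minimum at t₀
    (hmin' : ∀ ε > (0 : ℝ), ∃ c > (0 : ℝ),
      ∀ t ∈ erealIoo a b, ε ≤ |t - t₀| → V t₀ + c ≤ V t)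
    (hV' : deriv V t₀ = 0) (hV'' : 0 < deriv (deriv V) t₀)
    (hq : q t₀ ≠ 0)
    -- absolute integrability for some N
    (hint : ∃ N : ℝ, IntegrableOn (fun t => Real.exp (-N * V t) * |q t|) (erealIoo a b)) :
    Tendsto (fun N : ℝ =>
        (∫ t in erealIoo a b, Real.exp (-N * V t) * q t) /
          (Real.exp (-N * V t₀) * q t₀ * Real.sqrt (2 * π / (N * deriv (deriv V) t₀))))
      atTop (𝓝 1) := by
  have hS : IsOpen (erealIoo a b) := isOpen_Ioo.preimage continuous_coe_real_ereal
  have hV := tendsto_sub_div_sq_of_deriv_eq_zero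
    (eventually_of_mem (hS.mem_nhds ht₀) fun t ht => (hVan t ht).differentiableAt) hV'
    (hVan.deriv t₀ ht₀).differentiableAt.hasDerivAt
  obtain ⟨N₀, hN₀⟩ := hint
  exact tendsto_setIntegral_exp_neg_mul_div_laplace hS.measurableSet (hS.mem_nhds ht₀)
    hVan.continuousOn hqan.continuousOn hV'' hV hmin' hq hN₀

theorem stmt7 (a b : EReal) (hab : a < b) (V q : ℝ → ℝ) (t₀ : ℝ)
    (ht₀ : t₀ ∈ erealIoo a b)
    (hVan : AnalyticOnNhd ℝ V (erealIoo a b))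
    (hqan : AnalyticOnNhd ℝ q (erealIoo a b))
    -- V has a unique global minimum at t₀
    (hmin : ∀ t ∈ erealIoo a b, t ≠ t₀ → V t₀ < V t)
    (hmin' : ∀ ε > (0 : ℝ), ∃ c > (0 : ℝ),
      ∀ t ∈ erealIoo a b, ε ≤ |t - t₀| → V t₀ + c ≤ V t)
    (hV' : deriv V t₀ = 0) (hV'' : 0 < deriv (deriv V) t₀)
    (hq : q t₀ ≠ 0)
    -- absolute integrability for some N
    (hint : ∃ N : ℝ, IntegrableOn (fun t => Real.exp (-N * V t) * |q t|) (erealIoo a b)) :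
    Tendsto (fun N : ℝ =>
        (∫ t in erealIoo a b, Real.exp (-N * V t) * q t) /
          (Real.exp (-N * V t₀) * q t₀ * Real.sqrt (2 * π / (N * deriv (deriv V) t₀))))
      atTop (𝓝 1) :=
  stmt7_general a b V q t₀ ht₀ hVan hqan hmin' hV' hV'' hq hint
end

section
/- Let G, H : ℝ² → ℝ with G differentiable, and suppose that for all (x,y) ∈ ℝ², ∂G/∂x(x,y) = 2x·H(x,y) and ∂G/∂y(x,y) = 2y·H(x,y). Then there exists a function f : [0,∞) → ℝ such that G(x,y) = f(x² + y²) for all (x,y) ∈ ℝ²; equivalently, G(x,y) depends only on x² + y². -/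
/-! The hypotheses say that the derivative of `G` kills the rotation field `(-y, x)`. Hence `G` is
constant along every circle `θ ↦ (r cos θ, r sin θ)`, and writing `(x, y)` in polar coordinates
gives `G (x, y) = G (√(x² + y²), 0)`. -/

open Real

theorem ContinuousLinearMap.apply_prod_eq {F : Type*} [AddCommGroup F] [Module ℝ F]
    [TopologicalSpace F] (L : ℝ × ℝ →L[ℝ] F) (a b : ℝ) :
    L (a, b) = a • L (1, 0) + b • L (0, 1) := by
  have : ((a, b) : ℝ × ℝ) = a • ((1 : ℝ), (0 : ℝ)) + b • ((0 : ℝ), (1 : ℝ)) := by simp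
  rw [this, map_add, map_smul, map_smul]

theorem hasDerivAt_circle (r θ : ℝ) :
    HasDerivAt (fun t => (r * cos t, r * sin t)) (-(r * sin θ), r * cos θ) θ := by
  simpa [mul_neg] using ((hasDerivAt_cos θ).const_mul r).prodMk ((hasDerivAt_sin θ).const_mul r)

theorem apply_circle_eq_of_fderiv_rotation_eq_zero {G : ℝ × ℝ → ℝ} (hG : Differentiable ℝ G)
    (hrot : ∀ x y : ℝ, fderiv ℝ G (x, y) (-y, x) = 0) (r θ : ℝ) :
    G (r * cos θ, r * sin θ) = G (r, 0) := by
  have hderiv : ∀ t, HasDerivAt (fun t => G (r * cos t, r * sin t)) 0 t := fun t => by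
    have := (hG _).hasFDerivAt.comp_hasDerivAt t (hasDerivAt_circle r t)
    rwa [hrot] at this
  simpa using is_const_of_deriv_eq_zero (fun t => (hderiv t).differentiableAt)
    (fun t => (hderiv t).deriv) θ 0

theorem exists_polar (x y : ℝ) :
    ∃ θ, √(x ^ 2 + y ^ 2) * cos θ = x ∧ √(x ^ 2 + y ^ 2) * sin θ = y := by
  have hnorm : ‖(⟨x, y⟩ : ℂ)‖ = √(x ^ 2 + y ^ 2) := by
    rw [Complex.norm_def, Complex.normSq_mk, sq, sq]
  exact ⟨Complex.arg ⟨x, y⟩, hnorm ▸ Complex.norm_mul_cos_arg _, hnorm ▸ Complex.norm_mul_sin_arg _⟩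

theorem stmt12 (G H : ℝ × ℝ → ℝ) (hG : Differentiable ℝ G)
    (hx : ∀ x y : ℝ, fderiv ℝ G (x, y) (1, 0) = 2 * x * H (x, y))
    (hy : ∀ x y : ℝ, fderiv ℝ G (x, y) (0, 1) = 2 * y * H (x, y)) :
    ∃ f : ℝ → ℝ, ∀ x y : ℝ, G (x, y) = f (x ^ 2 + y ^ 2) := by
  have hrot : ∀ x y : ℝ, fderiv ℝ G (x, y) (-y, x) = 0 := fun x y => by
    rw [ContinuousLinearMap.apply_prod_eq, hx, hy, smul_eq_mul, smul_eq_mul]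
    ring
  refine ⟨fun s => G (√s, 0), fun x y => ?_⟩
  obtain ⟨θ, hcos, hsin⟩ := exists_polar x y
  show G (x, y) = G (√(x ^ 2 + y ^ 2), 0)
  rw [← apply_circle_eq_of_fderiv_rotation_eq_zero hG hrot _ θ, hcos, hsin]
end

section
/- For s ∈ [0,1] let f_s : [0,∞) → ℝ be smooth in t, and suppose there exist s₀, δ₀ > 0 such that (s,t) ↦ f_s(t), (s,t) ↦ f_s′(t), and (s,t) ↦ f_s″(t) are jointly continuous and bounded on [0,s₀]×[0,δ₀] (primes denote t-derivatives). Assume f₀(0) = 0, f₀′(0) = 0, f₀″(0) > 0, and f_s(0) < 0 for s > 0. Then there exist δ > 0, C > 0, and s₁ > 0 such that for every s ∈ (0,s₁] the function f_s has a unique zero t₀(s) in [0,δ], and t₀(s) ≤ C·(|f_s(0)|^{1/2} + |f_s′(0)|). -/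
/-!
Fix `q > 0` with `2 q < f₀''(0)`. By joint continuity of `f''` there is `δ > 0` with `f_s'' ≥ 2 q`
on `[0, δ]` for all small `s`, so each such `f_s` is strictly convex on `[0, δ]` and lies above the
parabola `f_s(0) + f_s'(0) t + q t²`. As `f_s(0), f_s'(0) → 0`, this parabola is positive at `δ`
for small `s`, while `f_s(0) < 0`: the intermediate value theorem gives a zero, strict convexity
makes it unique, and at the zero `t₀` the parabola gives `q t₀² ≤ |f_s(0)| + |f_s'(0)| t₀`, which
solves to the bound.
-/

open Filter Set Topology

lemma le_add_of_sq_le_sq_add_mul {u A B : ℝ} (hA : 0 ≤ A) (hB : 0 ≤ B)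
    (h : u ^ 2 ≤ A ^ 2 + B * u) : u ≤ A + B := by
  nlinarith

lemma le_of_mul_sq_le_add_mul {q t a b : ℝ} (hq : 0 < q) (ha : 0 ≤ a) (hb : 0 ≤ b)
    (h : q * t ^ 2 ≤ a + b * t) : t ≤ (1 / √q + 1 / q) * (√a + b) := by
  have hsq : 0 < √q := Real.sqrt_pos.2 hq
  have hu : √q * t ≤ √a + b / √q := by
    refine le_add_of_sq_le_sq_add_mul (Real.sqrt_nonneg a) (by positivity) ?_
    have : b / √q * (√q * t) = b * t := by field_simp
    rwa [mul_pow, Real.sq_sqrt hq.le, Real.sq_sqrt ha, this]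
  calc t ≤ (√a + b / √q) / √q := by rw [le_div_iff₀ hsq]; linarith
    _ = √a / √q + b / q := by rw [add_div, div_div, Real.mul_self_sqrt hq.le]
    _ ≤ (1 / √q + 1 / q) * (√a + b) := by
        have : 0 ≤ √a / q + b / √q := by positivity
        linarith [show (1 / √q + 1 / q) * (√a + b) = √a / √q + b / q + (√a / q + b / √q) by ring]

lemma exists_pos_forall_Icc_of_eventually {a b : ℝ} (ha : 0 < a) (hb : 0 < b)
    {P : ℝ × ℝ → Prop} (hP : ∀ᶠ x in 𝓝[Icc 0 a ×ˢ Icc 0 b] (0, 0), P x) :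
    ∃ r > 0, ∀ s ∈ Icc 0 r, ∀ t ∈ Icc 0 r, P (s, t) := by
  obtain ⟨ε, hε, hP⟩ := Metric.eventually_nhds_iff.1 (eventually_nhdsWithin_iff.1 hP)
  refine ⟨min (ε / 2) (min a b), by positivity, fun s hs t ht => hP ?_ ?_⟩
  · have hr : min (ε / 2) (min a b) < ε := (min_le_left _ _).trans_lt (half_lt_self hε)
    rw [Prod.dist_eq, Real.dist_eq, Real.dist_eq, sub_zero, sub_zero, abs_of_nonneg hs.1,
      abs_of_nonneg ht.1]
    exact max_lt (hs.2.trans_lt hr) (ht.2.trans_lt hr)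
  · exact ⟨⟨hs.1, hs.2.trans ((min_le_right _ _).trans (min_le_left _ _))⟩,
      ⟨ht.1, ht.2.trans ((min_le_right _ _).trans (min_le_right _ _))⟩⟩

lemma DifferentiableOn.hasDerivAt_derivWithin_Ici {g : ℝ → ℝ} {a t : ℝ}
    (hg : DifferentiableOn ℝ g (Ici a)) (ht : a < t) :
    HasDerivAt g (derivWithin g (Ici a) t) t := by
  rw [derivWithin_of_mem_nhds (Ici_mem_nhds ht)]
  exact ((hg t ht.le).differentiableAt (Ici_mem_nhds ht)).hasDerivAt

lemma mul_sub_le_sub_of_hasDerivAt {φ φ' : ℝ → ℝ} {a b C : ℝ} (hφ : ContinuousOn φ (Icc a b))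
    (hd : ∀ t ∈ Ioo a b, HasDerivAt φ (φ' t) t) (hC : ∀ t ∈ Ioo a b, C ≤ φ' t) :
    ∀ t ∈ Icc a b, C * (t - a) ≤ φ t - φ a := by
  intro t ht
  refine (convex_Icc a b).mul_sub_le_image_sub_of_le_deriv hφ ?_ ?_ a
    (left_mem_Icc.2 (ht.1.trans ht.2)) t ht ht.1
  · rw [interior_Icc]
    exact fun x hx => (hd x hx).differentiableAt.differentiableWithinAt
  · rw [interior_Icc]
    exact fun x hx => (hd x hx).deriv ▸ hC x hx

lemma add_mul_sub_add_mul_sub_sq_le {g g' g'' : ℝ → ℝ} {a b q : ℝ}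
    (hg : ContinuousOn g (Icc a b)) (hg' : ContinuousOn g' (Icc a b))
    (hd : ∀ t ∈ Ioo a b, HasDerivAt g (g' t) t) (hd' : ∀ t ∈ Ioo a b, HasDerivAt g' (g'' t) t)
    (h2 : ∀ t ∈ Ioo a b, 2 * q ≤ g'' t) :
    ∀ t ∈ Icc a b, g a + g' a * (t - a) + q * (t - a) ^ 2 ≤ g t := by
  have hslope := mul_sub_le_sub_of_hasDerivAt hg' hd' h2
  have hmono := mul_sub_le_sub_of_hasDerivAt
    (φ := fun t => g t - (g' a * (t - a) + q * (t - a) ^ 2))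
    (φ' := fun t => g' t - (g' a + 2 * q * (t - a))) (C := 0) (by fun_prop) ?_ ?_
  · intro t ht
    have := hmono t ht
    simp only [sub_self, mul_zero, zero_mul] at this
    nlinarith
  · intro t ht
    have hP : HasDerivAt (fun t => g' a * (t - a) + q * (t - a) ^ 2)
        (g' a + 2 * q * (t - a)) t := by
      have hlin := (hasDerivAt_id' t).sub_const a
      exact ((hlin.const_mul (g' a)).add ((hlin.pow 2).const_mul q)).congr_deriv (by ring)
    exact (hd t ht).sub hP
  · intro t ht
    linarith [hslope t (Ioo_subset_Icc_self ht)]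

lemma strictConvexOn_Icc_of_hasDerivAt {g g' g'' : ℝ → ℝ} {a b : ℝ}
    (hg : ContinuousOn g (Icc a b))
    (hd : ∀ t ∈ Ioo a b, HasDerivAt g (g' t) t) (hd' : ∀ t ∈ Ioo a b, HasDerivAt g' (g'' t) t)
    (hpos : ∀ t ∈ Ioo a b, 0 < g'' t) : StrictConvexOn ℝ (Icc a b) g := by
  refine strictConvexOn_of_deriv2_pos (convex_Icc a b) hg fun t ht => ?_
  rw [interior_Icc] at ht
  have hderiv : deriv g =ᶠ[𝓝 t] g' :=
    eventually_of_mem (Ioo_mem_nhds ht.1 ht.2) fun x hx => (hd x hx).deriv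
  rw [Function.iterate_succ_apply, Function.iterate_one, hderiv.deriv_eq, (hd' t ht).deriv]
  exact hpos t ht

lemma StrictConvexOn.subsingleton_zeros_Icc {g : ℝ → ℝ} {a b : ℝ}
    (hg : StrictConvexOn ℝ (Icc a b) g) (ha : g a < 0) :
    {t | t ∈ Icc a b ∧ g t = 0}.Subsingleton := by
  intro t₁ ⟨ht₁, hz₁⟩ t₂ ⟨ht₂, hz₂⟩
  wlog h : t₁ < t₂ generalizing t₁ t₂
  · rcases (not_lt.1 h).lt_or_eq with h | h
    · exact (this ht₂ hz₂ ht₁ hz₁ h).symm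
    · exact h.symm
  have ha₁ : a < t₁ := ht₁.1.lt_of_ne (by rintro rfl; linarith)
  have := hg.lt_on_openSegment (left_mem_Icc.2 (ht₁.1.trans ht₁.2)) ht₂ (ha₁.trans h).ne
    (by rw [openSegment_eq_Ioo (ha₁.trans h)]; exact ⟨ha₁, h⟩)
  rw [hz₁, hz₂, max_eq_right ha.le] at this
  exact absurd this (lt_irrefl 0)

lemma existsUnique_zero_of_two_mul_le_derivWithin_derivWithin {g : ℝ → ℝ} {δ q : ℝ}
    (hδ : 0 ≤ δ) (hq : 0 < q) (hg : ContDiffOn ℝ 2 g (Ici 0))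
    (h2 : ∀ t ∈ Icc 0 δ, 2 * q ≤ derivWithin (derivWithin g (Ici 0)) (Ici 0) t)
    (hg0 : g 0 < 0) (hgδ : 0 < g 0 + derivWithin g (Ici 0) 0 * δ + q * δ ^ 2) :
    (∃! t, t ∈ Icc 0 δ ∧ g t = 0) ∧ ∀ t ∈ Icc 0 δ, g t = 0 →
      t ≤ (1 / √q + 1 / q) * (√|g 0| + |derivWithin g (Ici 0) 0|) := by
  set g' := derivWithin g (Ici 0)
  have hg' : ContDiffOn ℝ 1 g' (Ici 0) := hg.derivWithin (uniqueDiffOn_Ici 0) (by norm_num)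
  have hd : ∀ t ∈ Ioo 0 δ, HasDerivAt g (g' t) t := fun t ht =>
    (hg.differentiableOn (by norm_num)).hasDerivAt_derivWithin_Ici ht.1
  have hd' : ∀ t ∈ Ioo 0 δ, HasDerivAt g' (derivWithin g' (Ici 0) t) t := fun t ht =>
    (hg'.differentiableOn one_ne_zero).hasDerivAt_derivWithin_Ici ht.1
  have hc : ContinuousOn g (Icc 0 δ) := hg.continuousOn.mono Icc_subset_Ici_self
  have hc' : ContinuousOn g' (Icc 0 δ) := hg'.continuousOn.mono Icc_subset_Ici_self
  have hlow : ∀ t ∈ Icc 0 δ, g 0 + g' 0 * t + q * t ^ 2 ≤ g t := by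
    simpa only [sub_zero] using add_mul_sub_add_mul_sub_sq_le hc hc' hd hd'
      fun t ht => h2 t (Ioo_subset_Icc_self ht)
  have hconv : StrictConvexOn ℝ (Icc 0 δ) g := strictConvexOn_Icc_of_hasDerivAt hc hd hd'
    fun t ht => by linarith [h2 t (Ioo_subset_Icc_self ht)]
  obtain ⟨t₀, ht₀, hz₀⟩ : (0 : ℝ) ∈ g '' Icc 0 δ :=
    intermediate_value_Icc hδ hc ⟨hg0.le, by linarith [hlow δ ⟨hδ, le_rfl⟩]⟩
  refine ⟨⟨t₀, ⟨ht₀, hz₀⟩, fun t ht => hconv.subsingleton_zeros_Icc hg0 ht ⟨ht₀, hz₀⟩⟩,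
    fun t ht hzt => le_of_mul_sq_le_add_mul hq (abs_nonneg _) (abs_nonneg _) ?_⟩
  have := hlow t ht
  nlinarith [neg_abs_le (g 0), neg_abs_le (g' 0), ht.1]

theorem stmt15_general (f : ℝ → ℝ → ℝ) (s₀ δ₀ : ℝ) (hs₀ : 0 < s₀) (hδ₀ : 0 < δ₀)
    -- each f_s is smooth on [0, ∞)
    (hsmooth : ∀ s ∈ Set.Icc (0 : ℝ) 1, ContDiffOn ℝ (⊤ : ℕ∞) (f s) (Set.Ici 0))
    -- joint continuity of f, f', f'' on [0,s₀] × [0,δ₀]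
    (hcont : ContinuousOn (fun x : ℝ × ℝ => f x.1 x.2) (Set.Icc 0 s₀ ×ˢ Set.Icc 0 δ₀))
    (hcont' : ContinuousOn
      (fun x : ℝ × ℝ => derivWithin (f x.1) (Set.Ici 0) x.2)
      (Set.Icc 0 s₀ ×ˢ Set.Icc 0 δ₀))
    (hcont'' : ContinuousOn
      (fun x : ℝ × ℝ => derivWithin (derivWithin (f x.1) (Set.Ici 0)) (Set.Ici 0) x.2)
      (Set.Icc 0 s₀ ×ˢ Set.Icc 0 δ₀))
    -- f₀(0) = 0, f₀'(0) = 0, f₀''(0) > 0, and f_s(0) < 0 for s > 0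
    (h00 : f 0 0 = 0)
    (h0' : derivWithin (f 0) (Set.Ici 0) 0 = 0)
    (h0'' : 0 < derivWithin (derivWithin (f 0) (Set.Ici 0)) (Set.Ici 0) 0)
    (hneg : ∀ s : ℝ, 0 < s → s ≤ 1 → f s 0 < 0) :
    ∃ δ > (0 : ℝ), ∃ C > (0 : ℝ), ∃ s₁ > (0 : ℝ), ∀ s : ℝ, 0 < s → s ≤ s₁ →
      (∃! t : ℝ, t ∈ Set.Icc 0 δ ∧ f s t = 0) ∧
      ∀ t ∈ Set.Icc (0 : ℝ) δ, f s t = 0 →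
        t ≤ C * (Real.sqrt |f s 0| + |derivWithin (f s) (Set.Ici 0) 0|) := by
  have horigin : ((0 : ℝ), (0 : ℝ)) ∈ Icc 0 s₀ ×ˢ Icc 0 δ₀ := ⟨⟨le_rfl, hs₀.le⟩, ⟨le_rfl, hδ₀.le⟩⟩
  obtain ⟨q, hq, hq2⟩ := exists_pos_mul_lt h0'' 2
  obtain ⟨δ, hδ, hf''⟩ := exists_pos_forall_Icc_of_eventually hs₀ hδ₀
    (Tendsto.eventually_const_lt hq2 (hcont'' _ horigin))
  -- small enough that `f_s(0), f_s'(0) > -ε` make the parabola positive at `δ`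
  set ε := q * δ ^ 2 / (1 + δ)
  have hε : 0 < ε := by positivity
  obtain ⟨r, hr, hsmall⟩ := exists_pos_forall_Icc_of_eventually hs₀ hδ₀
    ((Tendsto.eventually_const_lt (h00 ▸ neg_lt_zero.2 hε) (hcont _ horigin)).and
      (Tendsto.eventually_const_lt (h0' ▸ neg_lt_zero.2 hε) (hcont' _ horigin)))
  refine ⟨δ, hδ, 1 / √q + 1 / q, by positivity, min (min δ r) 1, by positivity,
    fun s hs hs₁ => ?_⟩
  have hsδ : s ≤ δ := hs₁.trans ((min_le_left _ _).trans (min_le_left _ _))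
  have hsr : s ≤ r := hs₁.trans ((min_le_left _ _).trans (min_le_right _ _))
  have hs1 : s ≤ 1 := hs₁.trans (min_le_right _ _)
  obtain ⟨hf0, hf'0⟩ := hsmall s ⟨hs.le, hsr⟩ 0 ⟨le_rfl, hr.le⟩
  have hεδ : ε * (1 + δ) = q * δ ^ 2 := div_mul_cancel₀ _ (by positivity)
  refine existsUnique_zero_of_two_mul_le_derivWithin_derivWithin hδ.le hq
    ((hsmooth s ⟨hs.le, hs1⟩).of_le (by norm_cast))
    (fun t ht => (hf'' s ⟨hs.le, hsδ⟩ t ht).le) (hneg s hs hs1) ?_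
  nlinarith

theorem stmt15 (f : ℝ → ℝ → ℝ) (s₀ δ₀ : ℝ) (hs₀ : 0 < s₀) (hδ₀ : 0 < δ₀)
    -- each f_s is smooth on [0, ∞)
    (hsmooth : ∀ s ∈ Set.Icc (0 : ℝ) 1, ContDiffOn ℝ (⊤ : ℕ∞) (f s) (Set.Ici 0))
    -- joint continuity of f, f', f'' on [0,s₀] × [0,δ₀]
    (hcont : ContinuousOn (fun x : ℝ × ℝ => f x.1 x.2) (Set.Icc 0 s₀ ×ˢ Set.Icc 0 δ₀))
    (hcont' : ContinuousOn
      (fun x : ℝ × ℝ => derivWithin (f x.1) (Set.Ici 0) x.2)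
      (Set.Icc 0 s₀ ×ˢ Set.Icc 0 δ₀))
    (hcont'' : ContinuousOn
      (fun x : ℝ × ℝ => derivWithin (derivWithin (f x.1) (Set.Ici 0)) (Set.Ici 0) x.2)
      (Set.Icc 0 s₀ ×ˢ Set.Icc 0 δ₀))
    -- boundedness of f, f', f'' on [0,s₀] × [0,δ₀]
    (hbdd : ∃ B : ℝ, ∀ x ∈ Set.Icc (0 : ℝ) s₀ ×ˢ Set.Icc (0 : ℝ) δ₀,
      |f x.1 x.2| ≤ B ∧
      |derivWithin (f x.1) (Set.Ici 0) x.2| ≤ B ∧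
      |derivWithin (derivWithin (f x.1) (Set.Ici 0)) (Set.Ici 0) x.2| ≤ B)
    -- f₀(0) = 0, f₀'(0) = 0, f₀''(0) > 0, and f_s(0) < 0 for s > 0
    (h00 : f 0 0 = 0)
    (h0' : derivWithin (f 0) (Set.Ici 0) 0 = 0)
    (h0'' : 0 < derivWithin (derivWithin (f 0) (Set.Ici 0)) (Set.Ici 0) 0)
    (hneg : ∀ s : ℝ, 0 < s → s ≤ 1 → f s 0 < 0) :
    ∃ δ > (0 : ℝ), ∃ C > (0 : ℝ), ∃ s₁ > (0 : ℝ), ∀ s : ℝ, 0 < s → s ≤ s₁ →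
      (∃! t : ℝ, t ∈ Set.Icc 0 δ ∧ f s t = 0) ∧
      ∀ t ∈ Set.Icc (0 : ℝ) δ, f s t = 0 →
        t ≤ C * (Real.sqrt |f s 0| + |derivWithin (f s) (Set.Ici 0) 0|) :=
  stmt15_general f s₀ δ₀ hs₀ hδ₀ hsmooth hcont hcont' hcont'' h00 h0' h0'' hneg
end

section
/- Suppose ν : I → ℝ is twice differentiable on an open interval I ⊆ ℝ and M₀(g, ν(g)) = 1 for all g ∈ I. If g* ∈ I is a point at which M₁(g*, ν(g*)) = 1, then ν″(g*) = M₄ − 2M₃M₂ + M₂³, where all moments on the right-hand side are evaluated at (g*, ν(g*)). -/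
/-!
Differentiation under the integral sign gives `∂_g M_i = -M_{i+2}` and `∂_ν M_i = -M_{i+1}`; the
domination is locally uniform in `(g, ν)` because `-t³` beats every term of lower degree in the
exponent. Differentiating `M₀(g, ν g) = 1` along `I` gives `M₂ + ν' M₁ = 0` there; differentiating
this once more at `g*`, where `M₁ = 1` and hence `ν' = -M₂`, gives the formula for `ν''`.
-/

open MeasureTheory Filter Set Topology

/-- The moments `M_i(g,ν) = ∫₀^∞ t^i e^{-t³ - g t² - (ν+1) t} dt`
of the interaction `p(t) = e^{-t³ - g t² - ν t}`. -/
noncomputable def momentGN (i : ℕ) (g ν : ℝ) : ℝ :=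
  ∫ t in Set.Ioi (0 : ℝ), t ^ i * Real.exp (-t ^ 3 - g * t ^ 2 - (ν + 1) * t)

local notation "π₁" => ContinuousLinearMap.fst ℝ ℝ ℝ
local notation "π₂" => ContinuousLinearMap.snd ℝ ℝ ℝ

noncomputable def momentWeight (g ν t : ℝ) : ℝ :=
  Real.exp (-t ^ 3 - g * t ^ 2 - (ν + 1) * t)

lemma momentWeight_pos (g ν t : ℝ) : 0 < momentWeight g ν t := Real.exp_pos _

lemma continuous_momentWeight (g ν : ℝ) : Continuous (momentWeight g ν) := by
  unfold momentWeight; fun_prop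

lemma exists_neg_cube_add_le (A B : ℝ) : ∃ C, ∀ t ≥ (0 : ℝ), -t ^ 3 + A * t ^ 2 + B * t ≤ C := by
  set S := |A| + |B| + 1
  refine ⟨2 * S ^ 3, fun t ht => ?_⟩
  have := le_abs_self A
  have := le_abs_self B
  have := abs_nonneg A
  have := abs_nonneg B
  rcases le_total t S with h | h
  · nlinarith [sq_nonneg (S - t), pow_le_pow_left₀ ht h 3, sq_nonneg S]
  · nlinarith [mul_nonneg ht ht, pow_pos (show (0 : ℝ) < S by positivity) 3]

lemma integrableOn_pow_mul_exp_neg_cube (k : ℕ) (A B : ℝ) :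
    IntegrableOn (fun t : ℝ => t ^ k * Real.exp (-t ^ 3 + A * t ^ 2 + B * t)) (Ioi 0) := by
  obtain ⟨C, hC⟩ := exists_neg_cube_add_le A (B + k + 1)
  refine ((exp_neg_integrableOn_Ioi 0 one_pos).const_mul (Real.exp C)).mono'
    (by fun_prop : Continuous _).aestronglyMeasurable ?_
  rw [ae_restrict_iff' measurableSet_Ioi]
  filter_upwards with t (ht : 0 < t)
  have hpow : t ^ k ≤ Real.exp (k * t) := by
    rw [Real.exp_nat_mul]
    exact pow_le_pow_left₀ ht.le (by linarith [Real.add_one_le_exp t]) k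
  rw [Real.norm_of_nonneg (by positivity)]
  calc t ^ k * Real.exp (-t ^ 3 + A * t ^ 2 + B * t)
      ≤ Real.exp (k * t) * Real.exp (-t ^ 3 + A * t ^ 2 + B * t) := by gcongr
    _ = Real.exp ((-t ^ 3 + A * t ^ 2 + (B + k + 1) * t) + -1 * t) := by
        rw [← Real.exp_add]; ring_nf
    _ ≤ Real.exp C * Real.exp (-1 * t) := by
        rw [← Real.exp_add]; gcongr; exact hC t ht.le

lemma integrableOn_pow_mul_momentWeight (i : ℕ) (g ν : ℝ) :
    IntegrableOn (fun t => t ^ i * momentWeight g ν t) (Ioi 0) := by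
  convert integrableOn_pow_mul_exp_neg_cube i (-g) (-(ν + 1)) using 3
  rw [momentWeight]; ring_nf

lemma momentWeight_le {g ν g' ν' t : ℝ} (hg : |g' - g| ≤ 1) (hν : |ν' - ν| ≤ 1) (ht : 0 ≤ t) :
    momentWeight g' ν' t ≤ Real.exp (-t ^ 3 + (|g| + 1) * t ^ 2 + (|ν| + 1) * t) := by
  rw [momentWeight, Real.exp_le_exp]
  have := abs_le.1 hg
  have := abs_le.1 hν
  have := neg_abs_le g
  have := neg_abs_le ν
  nlinarith [sq_nonneg t]

lemma norm_smul_fst_add_smul_snd_le (a b : ℝ) : ‖a • π₁ + b • π₂‖ ≤ |a| + |b| := by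
  refine (norm_add_le _ _).trans (add_le_add ?_ ?_) <;> rw [norm_smul, Real.norm_eq_abs]
  · exact mul_le_of_le_one_right (abs_nonneg a) (ContinuousLinearMap.norm_fst_le _ _ _)
  · exact mul_le_of_le_one_right (abs_nonneg b) (ContinuousLinearMap.norm_snd_le _ _ _)

lemma hasFDerivAt_pow_mul_momentWeight (i : ℕ) (t : ℝ) (p : ℝ × ℝ) :
    HasFDerivAt (fun q : ℝ × ℝ => t ^ i * momentWeight q.1 q.2 t)
      (-((t ^ (i + 2) * momentWeight p.1 p.2 t) • π₁ +
        (t ^ (i + 1) * momentWeight p.1 p.2 t) • π₂)) p := by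
  have hexponent : HasFDerivAt (fun q : ℝ × ℝ => -t ^ 3 - q.1 * t ^ 2 - (q.2 + 1) * t)
      (-(t ^ 2 • π₁ + t • π₂)) p := by
    have haffine : (fun q : ℝ × ℝ => -t ^ 3 - q.1 * t ^ 2 - (q.2 + 1) * t) =
        fun q => -t ^ 3 - t + (-(t ^ 2 • π₁ + t • π₂)) q := by
      ext q
      simp only [neg_apply, add_apply, smul_apply, ContinuousLinearMap.coe_fst',
        ContinuousLinearMap.coe_snd', smul_eq_mul]
      ring
    exact haffine ▸ (-(t ^ 2 • π₁ + t • π₂)).hasFDerivAt.const_add _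
  refine (hexponent.exp.const_mul (t ^ i)).congr_fderiv ?_
  rw [momentWeight]
  module

lemma hasFDerivAt_momentGN (i : ℕ) (g ν : ℝ) :
    HasFDerivAt (fun p : ℝ × ℝ => momentGN i p.1 p.2)
      (-(momentGN (i + 2) g ν • π₁ + momentGN (i + 1) g ν • π₂)) (g, ν) := by
  set bound : ℝ → ℝ := fun t => (t ^ (i + 2) + t ^ (i + 1)) *
    Real.exp (-t ^ 3 + (|g| + 1) * t ^ 2 + (|ν| + 1) * t)
  have hbound_int : IntegrableOn bound (Ioi 0) := by
    refine ((integrableOn_pow_mul_exp_neg_cube (i + 2) _ _).add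
      (integrableOn_pow_mul_exp_neg_cube (i + 1) _ _)).congr_fun
      (fun t _ => by simp only [bound, Pi.add_apply]; ring) measurableSet_Ioi
  have hint (k : ℕ) := integrableOn_pow_mul_momentWeight k g ν
  have hbound : ∀ᵐ t ∂volume.restrict (Ioi 0), ∀ p ∈ Metric.closedBall (g, ν) 1,
      ‖-((t ^ (i + 2) * momentWeight p.1 p.2 t) • π₁ +
        (t ^ (i + 1) * momentWeight p.1 p.2 t) • π₂)‖ ≤ bound t := by
    rw [ae_restrict_iff' measurableSet_Ioi]
    filter_upwards with t (ht : 0 < t) p hp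
    have hp' : |p.1 - g| ≤ 1 ∧ |p.2 - ν| ≤ 1 := by
      simpa [Metric.mem_closedBall, Prod.dist_eq, Real.dist_eq] using hp
    have := momentWeight_pos p.1 p.2 t
    rw [norm_neg]
    refine (norm_smul_fst_add_smul_snd_le _ _).trans ?_
    rw [abs_of_nonneg (by positivity), abs_of_nonneg (by positivity), ← add_mul]
    exact mul_le_mul_of_nonneg_left (momentWeight_le hp'.1 hp'.2 ht.le) (by positivity)
  have hderiv := hasFDerivAt_integral_of_dominated_of_fderiv_le
    (μ := volume.restrict (Ioi 0)) (x₀ := (g, ν))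
    (F := fun (p : ℝ × ℝ) (t : ℝ) => t ^ i * momentWeight p.1 p.2 t)
    (Metric.closedBall_mem_nhds (g, ν) one_pos)
    (Eventually.of_forall fun p =>
      ((continuous_pow i).mul (continuous_momentWeight p.1 p.2)).aestronglyMeasurable)
    (hint i) ((((hint _).smul_const π₁).add ((hint _).smul_const π₂)).neg).aestronglyMeasurable
    hbound hbound_int (Eventually.of_forall fun t p _ => hasFDerivAt_pow_mul_momentWeight i t p)
  rwa [integral_neg, integral_add ((hint _).smul_const π₁) ((hint _).smul_const π₂),
    integral_smul_const, integral_smul_const] at hderiv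

lemma HasDerivAt.momentGN {ν : ℝ → ℝ} {ν' g : ℝ} (i : ℕ) (hν : HasDerivAt ν ν' g) :
    HasDerivAt (fun x => momentGN i x (ν x))
      (-momentGN (i + 2) g (ν g) - ν' * momentGN (i + 1) g (ν g)) g := by
  have h := (hasFDerivAt_momentGN i g (ν g)).comp_hasDerivAt g ((hasDerivAt_id g).prodMk hν)
  simp only [neg_apply, add_apply, smul_apply, ContinuousLinearMap.coe_fst',
    ContinuousLinearMap.coe_snd', smul_eq_mul] at h
  exact h.congr_deriv (by ring)

lemma HasDerivAt.eq_zero_of_eventuallyEq_const {f : ℝ → ℝ} {f' x c : ℝ} (hf : HasDerivAt f f' x)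
    (hc : f =ᶠ[𝓝 x] fun _ => c) : f' = 0 :=
  hf.unique ((hasDerivAt_const x c).congr_of_eventuallyEq hc)

lemma momentGN_two_add_mul_momentGN_one_eq_zero {ν : ℝ → ℝ} {ν' g : ℝ} (hν : HasDerivAt ν ν' g)
    (hM0 : ∀ᶠ x in 𝓝 g, momentGN 0 x (ν x) = 1) :
    momentGN 2 g (ν g) + ν' * momentGN 1 g (ν g) = 0 := by
  have := (hν.momentGN 0).eq_zero_of_eventuallyEq_const hM0
  linear_combination -this

theorem stmt16_general (I : Set ℝ) (hIopen : IsOpen I)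
    (ν : ℝ → ℝ)
    (hdiff : ∀ g ∈ I, DifferentiableAt ℝ ν g)
    (hdiff2 : ∀ g ∈ I, DifferentiableAt ℝ (deriv ν) g)
    (hM0 : ∀ g ∈ I, momentGN 0 g (ν g) = 1)
    (gs : ℝ) (hgs : gs ∈ I) (hM1 : momentGN 1 gs (ν gs) = 1) :
    deriv (deriv ν) gs =
      momentGN 4 gs (ν gs) - 2 * momentGN 3 gs (ν gs) * momentGN 2 gs (ν gs) +
        (momentGN 2 gs (ν gs)) ^ 3 := by
  have hfirst : ∀ g ∈ I, momentGN 2 g (ν g) + deriv ν g * momentGN 1 g (ν g) = 0 := fun g hg =>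
    momentGN_two_add_mul_momentGN_one_eq_zero (hdiff g hg).hasDerivAt
      (eventually_of_mem (hIopen.mem_nhds hg) hM0)
  have hν' : deriv ν gs = -momentGN 2 gs (ν gs) := by
    linear_combination hfirst gs hgs - deriv ν gs * hM1
  have hν := (hdiff gs hgs).hasDerivAt
  have hsecond := ((hν.momentGN 2).add ((hdiff2 gs hgs).hasDerivAt.mul (hν.momentGN 1))
    ).eq_zero_of_eventuallyEq_const (eventually_of_mem (hIopen.mem_nhds hgs) hfirst)
  rw [hM1, hν'] at hsecond
  linear_combination hsecond

theorem stmt16 (I : Set ℝ) (hIopen : IsOpen I) (hIconn : I.OrdConnected)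
    (ν : ℝ → ℝ)
    (hdiff : ∀ g ∈ I, DifferentiableAt ℝ ν g)
    (hdiff2 : ∀ g ∈ I, DifferentiableAt ℝ (deriv ν) g)
    (hM0 : ∀ g ∈ I, momentGN 0 g (ν g) = 1)
    (gs : ℝ) (hgs : gs ∈ I) (hM1 : momentGN 1 gs (ν gs) = 1) :
    deriv (deriv ν) gs =
      momentGN 4 gs (ν gs) - 2 * momentGN 3 gs (ν gs) * momentGN 2 gs (ν gs) +
        (momentGN 2 gs (ν gs)) ^ 3 :=
  stmt16_general I hIopen ν hdiff hdiff2 hM0 gs hgs hM1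
end

section
/- For s ∈ [0,1] let f_s : [0,∞) → ℝ be smooth in t, and suppose there exist s₀, δ₀ > 0 such that f_s(t), f_s′(t), f_s″(t), f_s‴(t) are jointly continuous and bounded on [0,s₀]×[0,δ₀] (primes denote t-derivatives). Assume there are constants a > 0 and α > 0 such that f_s(0)/s → −a as s ↓ 0, f_s′(0) = O(s) as s ↓ 0, and f₀″(0) = α. Suppose t₀ : (0,s₀] → (0,δ₀] satisfies f_s(t₀(s)) = 0 for every s and t₀(s) → 0 as s ↓ 0. Then t₀(s) ~ √(2as/α) as s ↓ 0, i.e., t₀(s)/√(2as/α) → 1. -/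
/-!
By Taylor's theorem with the second derivative controlled uniformly near `(s, t) = (0, 0)`,
`0 = f_s(t₀) = f_s(0) + f_s'(0) t₀ + (α + o(1)) t₀² / 2`. Dividing by `s`, the first term tends
to `-a` and the second, `O(s) · t₀ / s`, to `0`; hence `t₀² / s → 2a / α`, and taking square
roots gives the claim.
-/

open Filter Set Topology

section Taylor

variable {g : ℝ → ℝ} {c ε t : ℝ}

theorem hasDerivWithinAt_Ici_of_differentiableOn_Ici (hg : DifferentiableOn ℝ g (Ici 0))
    {x : ℝ} (hx : 0 ≤ x) : HasDerivWithinAt g (derivWithin g (Ici 0) x) (Ici x) x :=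
  (hg x hx).hasDerivWithinAt.mono (Ici_subset_Ici.2 hx)

theorem taylor_quadratic_le_of_le_derivWithin_derivWithin (hg : DifferentiableOn ℝ g (Ici 0))
    (hg' : DifferentiableOn ℝ (derivWithin g (Ici 0)) (Ici 0))
    (hc : ∀ τ ∈ Ico 0 t, c ≤ derivWithin (derivWithin g (Ici 0)) (Ici 0) τ) (ht : 0 ≤ t) :
    g 0 + derivWithin g (Ici 0) 0 * t + c * t ^ 2 / 2 ≤ g t := by
  have hslope : ∀ τ ∈ Icc 0 t, derivWithin g (Ici 0) 0 + c * τ ≤ derivWithin g (Ici 0) τ :=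
    image_le_of_deriv_right_le_deriv_boundary (f := fun τ => derivWithin g (Ici 0) 0 + c * τ)
      (f' := fun _ => c) (by fun_prop)
      (fun x _ => (((hasDerivAt_id' x).const_mul c).const_add _).hasDerivWithinAt.congr_deriv
        (mul_one c)) (by simp) (hg'.continuousOn.mono Icc_subset_Ici_self)
      (fun x hx => hasDerivWithinAt_Ici_of_differentiableOn_Ici hg' hx.1) hc
  refine image_le_of_deriv_right_le_deriv_boundary
    (f := fun τ => g 0 + derivWithin g (Ici 0) 0 * τ + c * τ ^ 2 / 2)
    (f' := fun τ => derivWithin g (Ici 0) 0 + c * τ) (by fun_prop) (fun x _ => ?_) (by simp)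
    (hg.continuousOn.mono Icc_subset_Ici_self)
    (fun x hx => hasDerivWithinAt_Ici_of_differentiableOn_Ici hg hx.1)
    (fun x hx => hslope x (Ico_subset_Icc_self hx)) ⟨ht, le_rfl⟩
  have hpoly := (((hasDerivAt_id' x).const_mul (derivWithin g (Ici 0) 0)).const_add (g 0)).add
    (((hasDerivAt_pow 2 x).const_mul c).div_const 2)
  exact hpoly.hasDerivWithinAt.congr_deriv (by push_cast; ring)

theorem abs_sub_taylor_quadratic_le (hg : DifferentiableOn ℝ g (Ici 0))
    (hg' : DifferentiableOn ℝ (derivWithin g (Ici 0)) (Ici 0))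
    (hε : ∀ τ ∈ Ico 0 t, |derivWithin (derivWithin g (Ici 0)) (Ici 0) τ - c| ≤ ε)
    (ht : 0 ≤ t) :
    |g t - (g 0 + derivWithin g (Ici 0) 0 * t + c * t ^ 2 / 2)| ≤ ε * t ^ 2 / 2 := by
  have hneg : derivWithin (-g) (Ici 0) = -derivWithin g (Ici 0) :=
    funext fun _ => derivWithin.neg
  have hlower := taylor_quadratic_le_of_le_derivWithin_derivWithin hg hg' (c := c - ε)
    (fun τ hτ => by linarith [(abs_le.1 (hε τ hτ)).1]) ht
  have hupper := taylor_quadratic_le_of_le_derivWithin_derivWithin hg.neg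
    (hneg ▸ hg'.neg) (c := -(c + ε))
    (fun τ hτ => by
      rw [hneg, derivWithin.neg]
      linarith [(abs_le.1 (hε τ hτ)).2]) ht
  rw [hneg] at hupper
  simp only [Pi.neg_apply] at hupper
  rw [abs_le]
  constructor <;> linarith

end Taylor

theorem tendsto_taylor_quotient {f : ℝ → ℝ → ℝ} {t : ℝ → ℝ} {l : Filter ℝ} {α : ℝ}
    (hdiff : ∀ᶠ s in l, DifferentiableOn ℝ (f s) (Ici 0) ∧
      DifferentiableOn ℝ (derivWithin (f s) (Ici 0)) (Ici 0))
    (hD2 : Tendsto (fun x : ℝ × ℝ => derivWithin (derivWithin (f x.1) (Ici 0)) (Ici 0) x.2)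
      (l ×ˢ 𝓝[≥] 0) (𝓝 α))
    (ht : Tendsto t l (𝓝[>] 0)) :
    Tendsto (fun s => (f s (t s) - f s 0 - derivWithin (f s) (Ici 0) 0 * t s) / (t s ^ 2 / 2))
      l (𝓝 α) := by
  rw [Metric.tendsto_nhds]
  intro ε hε
  obtain ⟨p, hp, q, hq, hpq⟩ := eventually_prod_iff.1 (Metric.tendsto_nhds.1 hD2 (ε / 2)
    (half_pos hε))
  obtain ⟨u, hu, hqu⟩ := mem_nhdsGE_iff_exists_Ico_subset.1 hq
  have htu : ∀ᶠ s in l, t s ∈ Ioo 0 u := ht (Ioo_mem_nhdsGT hu)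
  filter_upwards [hdiff, hp, htu] with s ⟨hg, hg'⟩ hps ⟨hts, htsu⟩
  have hclose : ∀ τ ∈ Ico 0 (t s),
      |derivWithin (derivWithin (f s) (Ici 0)) (Ici 0) τ - α| ≤ ε / 2 := fun τ hτ =>
    (hpq hps (hqu ⟨hτ.1, hτ.2.trans htsu⟩)).le
  have hrem := abs_sub_taylor_quadratic_le hg hg' hclose hts.le
  have ht2 : 0 < t s ^ 2 / 2 := by positivity
  rw [Real.dist_eq]
  calc |(f s (t s) - f s 0 - derivWithin (f s) (Ici 0) 0 * t s) / (t s ^ 2 / 2) - α|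
      = |f s (t s) - (f s 0 + derivWithin (f s) (Ici 0) 0 * t s + α * t s ^ 2 / 2)|
          / (t s ^ 2 / 2) := by
        rw [← abs_of_pos ht2, ← abs_div, abs_of_pos ht2]
        congr 1
        field_simp
        ring
    _ ≤ ε / 2 := by rw [div_le_iff₀ ht2]; linarith
    _ < ε := half_lt_self hε

theorem tendsto_sq_div_of_quadratic_eq_zero {l : Filter ℝ} {v₀ v₁ q t : ℝ → ℝ} {a α : ℝ}
    (hα : α ≠ 0) (hq : Tendsto q l (𝓝 α)) (hv₀ : Tendsto (fun s => v₀ s / s) l (𝓝 (-a)))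
    (hv₁ : Tendsto (fun s => v₁ s * t s / s) l (𝓝 0))
    (hzero : ∀ᶠ s in l, v₀ s + v₁ s * t s + q s * t s ^ 2 / 2 = 0) :
    Tendsto (fun s => t s ^ 2 / s) l (𝓝 (2 * a / α)) := by
  have hlim : Tendsto (fun s => 2 * (-(v₀ s / s) - v₁ s * t s / s) / q s) l
      (𝓝 (2 * (-(-a) - 0) / α)) :=
    ((hv₀.neg.sub hv₁).const_mul 2).div hq hα
  rw [neg_neg, sub_zero] at hlim
  refine hlim.congr' ?_
  filter_upwards [hzero, hq.eventually_ne hα] with s hs hqs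
  rcases eq_or_ne s 0 with rfl | hs0
  · simp
  field_simp
  linear_combination (-2) * hs

theorem tendsto_div_sqrt_of_tendsto_sq_div {l : Filter ℝ} {t : ℝ → ℝ} {c : ℝ} (hc : 0 < c)
    (ht : ∀ᶠ s in l, 0 ≤ t s) (h : Tendsto (fun s => t s ^ 2 / s) l (𝓝 c)) :
    Tendsto (fun s => t s / √(c * s)) l (𝓝 1) := by
  have hlim : Tendsto (fun s => √(t s ^ 2 / s / c)) l (𝓝 √(c / c)) :=
    (h.div_const c).sqrt
  rw [div_self hc.ne', Real.sqrt_one] at hlim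
  refine hlim.congr' ?_
  filter_upwards [ht] with s hs
  rw [div_div, mul_comm s, Real.sqrt_div (sq_nonneg _), Real.sqrt_sq hs]

theorem tendsto_mul_div_self_of_abs_le {l : Filter ℝ} {b t : ℝ → ℝ}
    (hb : ∃ K : ℝ, ∀ᶠ s in l, |b s| ≤ K * s) (ht : Tendsto t l (𝓝 0)) :
    Tendsto (fun s => b s * t s / s) l (𝓝 0) := by
  obtain ⟨K, hK⟩ := hb
  have hbig : b =O[l] id := Asymptotics.IsBigO.of_bound |K| <| hK.mono fun s hs =>
    hs.trans ((le_abs_self _).trans (abs_mul K s).le)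
  simpa using (hbig.mul_isLittleO ((Asymptotics.isLittleO_one_iff ℝ).2 ht)).tendsto_div_nhds_zero

theorem stmt19_general (f : ℝ → ℝ → ℝ) (s₀ δ₀ : ℝ) (hs₀ : 0 < s₀) (hδ₀ : 0 < δ₀)
    -- each f_s is smooth on [0, ∞)
    (hsmooth : ∀ s ∈ Set.Icc (0 : ℝ) 1, ContDiffOn ℝ (⊤ : ℕ∞) (f s) (Set.Ici 0))
    -- joint continuity of f, f', f'', f''' on [0,s₀] × [0,δ₀]
    (hcont'' : ContinuousOn
      (fun x : ℝ × ℝ => derivWithin (derivWithin (f x.1) (Set.Ici 0)) (Set.Ici 0) x.2)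
      (Set.Icc 0 s₀ ×ˢ Set.Icc 0 δ₀))
    (a α : ℝ) (ha : 0 < a) (hα : 0 < α)
    -- f_s(0)/s → -a, f_s'(0) = O(s), f₀''(0) = α
    (hf0 : Tendsto (fun s => f s 0 / s) (𝓝[>] (0 : ℝ)) (𝓝 (-a)))
    (hf'0 : ∃ K : ℝ, ∀ᶠ s in 𝓝[>] (0 : ℝ), |derivWithin (f s) (Set.Ici 0) 0| ≤ K * s)
    (hf''0 : derivWithin (derivWithin (f 0) (Set.Ici 0)) (Set.Ici 0) 0 = α)
    -- the family of zeros t₀(s)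
    (t₀ : ℝ → ℝ)
    (ht₀ : ∀ s : ℝ, 0 < s → s ≤ s₀ → 0 < t₀ s ∧ t₀ s ≤ δ₀ ∧ f s (t₀ s) = 0)
    (hlim : Tendsto t₀ (𝓝[>] (0 : ℝ)) (𝓝 0)) :
    Tendsto (fun s => t₀ s / Real.sqrt (2 * a * s / α)) (𝓝[>] (0 : ℝ)) (𝓝 1) := by
  have hsmall : ∀ᶠ s in 𝓝[>] (0 : ℝ), s ∈ Ioo 0 (min s₀ 1) := Ioo_mem_nhdsGT (lt_min hs₀ one_pos)
  have hzero : ∀ᶠ s in 𝓝[>] (0 : ℝ), 0 < t₀ s ∧ f s (t₀ s) = 0 := by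
    filter_upwards [hsmall] with s hs
    obtain ⟨hpos, -, hroot⟩ := ht₀ s hs.1 (hs.2.le.trans (min_le_left _ _))
    exact ⟨hpos, hroot⟩
  have hdiff : ∀ᶠ s in 𝓝[>] (0 : ℝ), DifferentiableOn ℝ (f s) (Ici 0) ∧
      DifferentiableOn ℝ (derivWithin (f s) (Ici 0)) (Ici 0) := by
    filter_upwards [hsmall] with s hs
    have h := hsmooth s ⟨hs.1.le, hs.2.le.trans (min_le_right _ _)⟩
    exact ⟨h.differentiableOn (by simp),
      (h.derivWithin (uniqueDiffOn_Ici 0) (m := 1) (WithTop.coe_le_coe.2 le_top)).differentiableOn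
        one_ne_zero⟩
  have hD2 : Tendsto (fun x : ℝ × ℝ => derivWithin (derivWithin (f x.1) (Ici 0)) (Ici 0) x.2)
      (𝓝[>] 0 ×ˢ 𝓝[≥] 0) (𝓝 α) := by
    have h := hcont'' (0, 0) ⟨⟨le_rfl, hs₀.le⟩, le_rfl, hδ₀.le⟩
    rw [ContinuousWithinAt, hf''0, nhdsWithin_prod_eq, nhdsWithin_Icc_eq_nhdsGE hs₀,
      nhdsWithin_Icc_eq_nhdsGE hδ₀] at h
    exact h.mono_left (prod_mono (nhdsWithin_mono _ Ioi_subset_Ici_self) le_rfl)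
  have ht : Tendsto t₀ (𝓝[>] 0) (𝓝[>] 0) :=
    tendsto_nhdsWithin_iff.2 ⟨hlim, hzero.mono fun _ h => h.1⟩
  have hsq := tendsto_sq_div_of_quadratic_eq_zero hα.ne' (tendsto_taylor_quotient hdiff hD2 ht)
    hf0 (tendsto_mul_div_self_of_abs_le hf'0 hlim) <| by
      filter_upwards [hzero] with s ⟨hpos, hroot⟩
      rw [hroot]
      field_simp
      ring
  simpa only [div_mul_eq_mul_div] using
    tendsto_div_sqrt_of_tendsto_sq_div (by positivity) (hzero.mono fun _ h => h.1.le) hsq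

theorem stmt19 (f : ℝ → ℝ → ℝ) (s₀ δ₀ : ℝ) (hs₀ : 0 < s₀) (hδ₀ : 0 < δ₀)
    -- each f_s is smooth on [0, ∞)
    (hsmooth : ∀ s ∈ Set.Icc (0 : ℝ) 1, ContDiffOn ℝ (⊤ : ℕ∞) (f s) (Set.Ici 0))
    -- joint continuity of f, f', f'', f''' on [0,s₀] × [0,δ₀]
    (hcont : ContinuousOn (fun x : ℝ × ℝ => f x.1 x.2) (Set.Icc 0 s₀ ×ˢ Set.Icc 0 δ₀))
    (hcont' : ContinuousOn
      (fun x : ℝ × ℝ => derivWithin (f x.1) (Set.Ici 0) x.2)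
      (Set.Icc 0 s₀ ×ˢ Set.Icc 0 δ₀))
    (hcont'' : ContinuousOn
      (fun x : ℝ × ℝ => derivWithin (derivWithin (f x.1) (Set.Ici 0)) (Set.Ici 0) x.2)
      (Set.Icc 0 s₀ ×ˢ Set.Icc 0 δ₀))
    (hcont''' : ContinuousOn
      (fun x : ℝ × ℝ =>
        derivWithin (derivWithin (derivWithin (f x.1) (Set.Ici 0)) (Set.Ici 0)) (Set.Ici 0) x.2)
      (Set.Icc 0 s₀ ×ˢ Set.Icc 0 δ₀))
    -- boundedness of f, f', f'', f''' on [0,s₀] × [0,δ₀]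
    (hbdd : ∃ B : ℝ, ∀ x ∈ Set.Icc (0 : ℝ) s₀ ×ˢ Set.Icc (0 : ℝ) δ₀,
      |f x.1 x.2| ≤ B ∧
      |derivWithin (f x.1) (Set.Ici 0) x.2| ≤ B ∧
      |derivWithin (derivWithin (f x.1) (Set.Ici 0)) (Set.Ici 0) x.2| ≤ B ∧
      |derivWithin (derivWithin (derivWithin (f x.1) (Set.Ici 0)) (Set.Ici 0)) (Set.Ici 0)
        x.2| ≤ B)
    (a α : ℝ) (ha : 0 < a) (hα : 0 < α)
    -- f_s(0)/s → -a, f_s'(0) = O(s), f₀''(0) = α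
    (hf0 : Tendsto (fun s => f s 0 / s) (𝓝[>] (0 : ℝ)) (𝓝 (-a)))
    (hf'0 : ∃ K : ℝ, ∀ᶠ s in 𝓝[>] (0 : ℝ), |derivWithin (f s) (Set.Ici 0) 0| ≤ K * s)
    (hf''0 : derivWithin (derivWithin (f 0) (Set.Ici 0)) (Set.Ici 0) 0 = α)
    -- the family of zeros t₀(s)
    (t₀ : ℝ → ℝ)
    (ht₀ : ∀ s : ℝ, 0 < s → s ≤ s₀ → 0 < t₀ s ∧ t₀ s ≤ δ₀ ∧ f s (t₀ s) = 0)
    (hlim : Tendsto t₀ (𝓝[>] (0 : ℝ)) (𝓝 0)) :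
    Tendsto (fun s => t₀ s / Real.sqrt (2 * a * s / α)) (𝓝[>] (0 : ℝ)) (𝓝 1) :=
  stmt19_general f s₀ δ₀ hs₀ hδ₀ hsmooth hcont'' a α ha hα hf0 hf'0 hf''0 t₀ ht₀ hlim
end
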